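/- arXiv:2412.04516 — 2 statements merged into one kernel-verified Lean document; each statement's English description precedes it below -/
import Mathlib

section
/- Let G be a linearly ordered abelian group, let 0 < a be an element of G, let 1 ≤ n ≤ s < m be integers, and let S' be an n-element subset of [m]_a. Then the extended panhandle matroid P_{n,s,m}(a) is matched to the extended Schubert matroid SM_m(a,S') if and only if S' = {(m−n+1)a, (m−n+2)a, …, ma} (equivalently, if and only if every n-element subset of [m]_a is a basis of SM_m(a,S')). -/
variable {G : Type*} [AddCommGroup G] [LinearOrder G] [IsOrderedAddMonoid G]

/-- `[m]_a = {a, 2a, …, ma}`, the set of the first `m` positive multiples of `a`. -/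
def multSet (a : G) (m : ℕ) : Finset G :=
  (Finset.Icc 1 m).image (fun i : ℕ => i • a)

/-- `B` is a basis of the extended panhandle matroid `P_{n,s,m}(a)`:
an `n`-subset of `[m]_a` meeting `[s]_a` in at least `n - 1` elements. -/
def PanhandleBasis (a : G) (n s m : ℕ) (B : Finset G) : Prop :=
  B ⊆ multSet a m ∧ B.card = n ∧ n - 1 ≤ (B ∩ multSet a s).card

/-- `T ⪯ S` : the `i`-th smallest element of `T` does not exceed the `i`-th
smallest element of `S`, for every `i`. -/
def DomLE (T S : Finset G) : Prop :=
  ∀ (i : ℕ) (hT : i < (T.sort (· ≤ ·)).length) (hS : i < (S.sort (· ≤ ·)).length),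
    (T.sort (· ≤ ·))[i]'hT ≤ (S.sort (· ≤ ·))[i]'hS

/-- `T` is a basis of the extended Schubert matroid `SM_m(a, S)`:
an `n`-subset of `[m]_a` with `T ⪯ S`. -/
def SchubertBasis (a : G) (n m : ℕ) (S T : Finset G) : Prop :=
  T ⊆ multSet a m ∧ T.card = n ∧ DomLE T S

/-- A matroid (given by its ground set `E` and its family `𝓑₁` of bases) is matched to a
matroid with basis family `𝓑₂` if every basis `B` with `𝓑₁ B` admits a basis `B'` with
`𝓑₂ B'` and a bijection `f : B → B'` such that `x + f x ∉ E` for all `x ∈ B`. -/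
def FamMatchedTo (E : Finset G) (𝓑₁ 𝓑₂ : Finset G → Prop) : Prop :=
  ∀ B, 𝓑₁ B → ∃ B', 𝓑₂ B' ∧
    ∃ f : G → G, Set.BijOn f ↑B ↑B' ∧ ∀ x ∈ B, x + f x ∉ E



section AuxLemmas

variable {G : Type*} [AddCommGroup G] [LinearOrder G] [IsOrderedAddMonoid G] {a : G}

private lemma phi_sm (ha : 0 < a) : StrictMono (fun i : ℕ => i • a) :=
  fun _ _ h => nsmul_lt_nsmul_left ha h

private lemma mem_multSet' {x : G} {m : ℕ} :
    x ∈ (Finset.Icc 1 m).image (fun i : ℕ => i • a) ↔ ∃ j, 1 ≤ j ∧ j ≤ m ∧ j • a = x := by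
  simp [Finset.mem_image, Finset.mem_Icc, and_assoc]

private lemma chain_nat (L : List ℕ) (hL : L.Pairwise (· < ·)) :
    ∀ d i (h : i + d < L.length), L[i]'(by omega) + d ≤ L[i + d]'h := by
  intro d
  induction d with
  | zero => intro i h; simp
  | succ d ih =>
    intro i h
    have h1 : i + d < L.length := by omega
    have h2 := ih i h1
    have h3 : L[i + d]'h1 < L[i + d + 1]'h :=
      List.pairwise_iff_getElem.mp hL (i + d) (i + d + 1) h1 h (by omega)
    exact Nat.succ_le_of_lt (lt_of_le_of_lt h2 h3)

private lemma chain_nat' (L : List ℕ) (hL : L.Pairwise (· < ·)) {i j : ℕ} (hij : i ≤ j)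
    (hj : j < L.length) : L[i]'(lt_of_le_of_lt hij hj) + (j - i) ≤ L[j]'hj := by
  obtain ⟨d, rfl⟩ := Nat.exists_eq_add_of_le hij
  simpa using chain_nat L hL d i hj

private lemma sort_image (ha : 0 < a) (J : Finset ℕ) :
    (J.image (fun i : ℕ => i • a)).sort (· ≤ ·) = (J.sort (· ≤ ·)).map (fun i : ℕ => i • a) := by
  refine (fun h1 h2 h3 => List.Perm.eq_of_pairwise' (r := (· ≤ ·)) h2 h3 h1) ?_ ?_ ?_
  · apply (List.perm_ext_iff_of_nodup (Finset.sort_nodup _ _) ?_).mpr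
    · intro x
      rw [Finset.mem_sort]
      simp only [List.mem_map, Finset.mem_image, Finset.mem_sort]
    · exact (Finset.sort_nodup _ _).map ((phi_sm ha).injective)
  · exact Finset.pairwise_sort _ _
  · exact List.pairwise_map.mpr <| (Finset.pairwise_sort _ _).imp
      (fun h => (phi_sm ha).monotone h)

private lemma sort_Icc_nat (l k : ℕ) :
    (Finset.Icc l k).sort (· ≤ ·) = List.range' l (k + 1 - l) := by
  refine (fun h1 h2 h3 => List.Perm.eq_of_pairwise' (r := (· ≤ ·)) h2 h3 h1) ?_ ?_ ?_
  · apply (List.perm_ext_iff_of_nodup (Finset.sort_nodup _ _) (List.nodup_range' 1 Nat.one_pos)).mpr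
    intro x
    rw [Finset.mem_sort, Finset.mem_Icc, List.mem_range'_1]
    omega
  · exact Finset.pairwise_sort _ _
  · exact (List.pairwise_lt_range' 1 Nat.one_pos).imp le_of_lt

end AuxLemmas

section AuxLemmas2

variable {G : Type*} [AddCommGroup G] [LinearOrder G] [IsOrderedAddMonoid G] {a : G}

private lemma sort_le_bound (J : Finset ℕ) (m n : ℕ) (hJ : ∀ x ∈ J, x ≤ m)
    (hc : (J.sort (· ≤ ·)).length = n) (i : ℕ) (hi : i < n) :
    (J.sort (· ≤ ·))[i]'(by omega) ≤ m - n + 1 + i := by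
  have hlast : n - 1 < (J.sort (· ≤ ·)).length := by omega
  have h1 := chain_nat' (J.sort (· ≤ ·)) (Finset.sortedLT_sort J).pairwise
    (i := i) (j := n - 1) (by omega) hlast
  have h2 : (J.sort (· ≤ ·))[n - 1]'hlast ≤ m :=
    hJ _ ((Finset.mem_sort (α := ℕ) (· ≤ ·)).mp (List.getElem_mem hlast))
  have h3 : (J.sort (· ≤ ·))[i]'(by omega) + (n - 1 - i) ≤ m := le_trans h1 h2
  omega

private lemma domLE_top (ha : 0 < a) {m n : ℕ} (hn : 1 ≤ n) (hnm : n ≤ m)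
    {T : Finset G} (hT : T ⊆ (Finset.Icc 1 m).image (fun i : ℕ => i • a)) (hTc : T.card = n) :
    DomLE T ((Finset.Icc (m - n + 1) m).image (fun i : ℕ => i • a)) := by
  classical
  set J : Finset ℕ := (Finset.Icc 1 m).filter (fun j => j • a ∈ T) with hJdef
  have hTJ : T = J.image (fun i : ℕ => i • a) := by
    ext x
    simp only [hJdef, Finset.mem_image, Finset.mem_filter, Finset.mem_Icc]
    constructor
    · intro hx
      obtain ⟨j, h1, h2, h3⟩ := mem_multSet'.mp (hT hx)
      exact ⟨j, ⟨⟨h1, h2⟩, h3 ▸ hx⟩, h3⟩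
    · rintro ⟨j, ⟨_, hj⟩, rfl⟩; exact hj
  have hJm : ∀ x ∈ J, x ≤ m := fun x hx => (Finset.mem_Icc.mp (Finset.mem_filter.mp hx).1).2
  have hJcard : J.card = n := by
    rw [← hTc, hTJ, Finset.card_image_of_injective _ (phi_sm ha).injective]
  have hTs : T.sort (· ≤ ·) = (J.sort (· ≤ ·)).map (fun i : ℕ => i • a) := by
    rw [hTJ, sort_image ha]
  have hSs : ((Finset.Icc (m - n + 1) m).image (fun i : ℕ => i • a)).sort (· ≤ ·)
      = (List.range' (m - n + 1) n).map (fun i : ℕ => i • a) := by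
    rw [sort_image ha, sort_Icc_nat]
    congr 2
    omega
  intro i hTi hSi
  have hJlen : (J.sort (· ≤ ·)).length = n := by rw [Finset.length_sort, hJcard]
  have hilt : i < n := by
    rw [hTs, List.length_map, hJlen] at hTi; exact hTi
  have hle := sort_le_bound J m n hJm hJlen i hilt
  simp only [hTs, hSs, List.getElem_map, List.getElem_range'_1]
  exact (phi_sm ha).monotone hle

private lemma sort_zero_le {S : Finset G} {y : G} (hy : y ∈ S)
    (h0 : 0 < (S.sort (· ≤ ·)).length) : (S.sort (· ≤ ·))[0]'h0 ≤ y := by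
  rw [← Finset.mem_sort (α := G) (· ≤ ·)] at hy
  obtain ⟨k, hk, rfl⟩ := List.getElem_of_mem hy
  rcases Nat.eq_zero_or_pos k with rfl | hkpos
  · exact le_refl _
  · exact List.pairwise_iff_getElem.mp (Finset.pairwise_sort _ _) 0 k h0 hk hkpos

end AuxLemmas2
/-- Theorem: `P_{n,s,m}(a)` is matched to `SM_m(a, S')` iff
`S' = {(m-n+1)a, …, ma}`, i.e. iff `SM_m(a, S')` is the uniform matroid of rank `n`. -/
theorem panhandle_matched_schubert_iff {G : Type*} [AddCommGroup G] [LinearOrder G] [IsOrderedAddMonoid G]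
    (a : G) (ha : 0 < a) (n s m : ℕ) (hn : 1 ≤ n) (hs : n ≤ s) (hsm : s < m)
    (S' : Finset G) (hS' : S' ⊆ multSet a m) (hS'card : S'.card = n) :
    FamMatchedTo (multSet a m) (PanhandleBasis a n s m) (SchubertBasis a n m S') ↔
      S' = (Finset.Icc (m - n + 1) m).image (fun i : ℕ => i • a) := by
  have hnm : n ≤ m := le_trans hs (le_of_lt hsm)
  have hinj : Function.Injective (fun i : ℕ => i • a) := (phi_sm ha).injective
  have hTopcard : ((Finset.Icc (m - n + 1) m).image (fun i : ℕ => i • a)).card = n := by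
    rw [Finset.card_image_of_injective _ hinj, Nat.card_Icc]
    omega
  constructor
  · intro hmatch
    -- feed the panhandle basis {a, 2a, …, na}
    have hBpan : PanhandleBasis a n s m (multSet a n) := by
      refine ⟨?_, ?_, ?_⟩
      · exact Finset.image_subset_image (Finset.Icc_subset_Icc_right hnm)
      · rw [multSet, Finset.card_image_of_injective _ hinj, Nat.card_Icc]
        omega
      · have hsub : multSet a n ⊆ multSet a s :=
          Finset.image_subset_image (Finset.Icc_subset_Icc_right hs)
        rw [Finset.inter_eq_left.mpr hsub, multSet,
          Finset.card_image_of_injective _ hinj, Nat.card_Icc]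
        omega
    obtain ⟨B', ⟨hB'sub, hB'card, hB'dom⟩, f, hbij, hf⟩ := hmatch _ hBpan
    -- B' must be the top set
    have hB'top : B' = (Finset.Icc (m - n + 1) m).image (fun i : ℕ => i • a) := by
      apply Finset.eq_of_subset_of_card_le
      · intro y hy
        obtain ⟨x, hx, hfx⟩ := hbij.2.2 (Finset.mem_coe.mpr hy)
        obtain ⟨i, hi1, hin, rfl⟩ := mem_multSet'.mp (Finset.mem_coe.mp hx)
        obtain ⟨j, hj1, hjm, hjy⟩ := mem_multSet'.mp (hB'sub hy)
        have hnot := hf _ (Finset.mem_coe.mp hx)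
        rw [hfx, ← hjy, ← add_nsmul] at hnot
        have hlt : m < i + j := by
          by_contra hc
          exact hnot (mem_multSet'.mpr ⟨i + j, by omega, by omega, rfl⟩)
        exact Finset.mem_image.mpr ⟨j, Finset.mem_Icc.mpr ⟨by omega, hjm⟩, hjy⟩
      · rw [hTopcard, hB'card]
    rw [hB'top] at hB'dom
    -- look at the smallest elements
    have hTlen : (((Finset.Icc (m - n + 1) m).image (fun i : ℕ => i • a)).sort (· ≤ ·)).length
        = n := by rw [Finset.length_sort, hTopcard]
    have hSlen : (S'.sort (· ≤ ·)).length = n := by rw [Finset.length_sort, hS'card]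
    have h0 := hB'dom 0 (by omega) (by omega)
    have hTs : (((Finset.Icc (m - n + 1) m).image (fun i : ℕ => i • a)).sort (· ≤ ·))
        = (List.range' (m - n + 1) n).map (fun i : ℕ => i • a) := by
      rw [sort_image ha, sort_Icc_nat]
      congr 2
      omega
    have hT0 : (((Finset.Icc (m - n + 1) m).image (fun i : ℕ => i • a)).sort
        (· ≤ ·))[0]'(by omega) = (m - n + 1) • a := by
      simp [hTs, List.getElem_range'_1]
    rw [hT0] at h0
    -- every element of S' is at least (m-n+1) • a
    have hge : ∀ y ∈ S', (m - n + 1) • a ≤ y := fun y hy =>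
      le_trans h0 (sort_zero_le hy (by omega))
    apply Finset.eq_of_subset_of_card_le
    · intro y hy
      obtain ⟨j, hj1, hjm, hjy⟩ := mem_multSet'.mp (hS' hy)
      have hj2 : m - n + 1 ≤ j := by
        by_contra hc
        have := phi_sm ha (show j < m - n + 1 by omega)
        simp only at this
        rw [hjy] at this
        exact absurd (hge y hy) (not_le.mpr this)
      exact Finset.mem_image.mpr ⟨j, Finset.mem_Icc.mpr ⟨hj2, hjm⟩, hjy⟩
    · rw [hTopcard, hS'card]
  · rintro rfl
    rintro B ⟨hBsub, hBcard, -⟩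
    have hcnot : (m + 1) • a ∉ multSet a m := by
      intro hc
      obtain ⟨j, hj1, hjm, hj⟩ := mem_multSet'.mp hc
      have := phi_sm ha (show j < m + 1 by omega)
      simp only at this
      rw [hj] at this
      exact lt_irrefl _ this
    have hfinj : Function.Injective (fun x : G => (m + 1) • a - x) := sub_right_injective
    refine ⟨B.image (fun x => (m + 1) • a - x), ⟨?_, ?_, ?_⟩,
      (fun x => (m + 1) • a - x), ?_, ?_⟩
    · intro y hy
      obtain ⟨x, hx, rfl⟩ := Finset.mem_image.mp hy
      obtain ⟨i, hi1, him, rfl⟩ := mem_multSet'.mp (hBsub hx)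
      refine mem_multSet'.mpr ⟨m + 1 - i, by omega, by omega, ?_⟩
      rw [sub_nsmul a (show i ≤ m + 1 by omega), sub_eq_add_neg]
    · rw [Finset.card_image_of_injective _ hfinj, hBcard]
    · apply domLE_top ha hn hnm
      · intro y hy
        obtain ⟨x, hx, rfl⟩ := Finset.mem_image.mp hy
        obtain ⟨i, hi1, him, rfl⟩ := mem_multSet'.mp (hBsub hx)
        refine mem_multSet'.mpr ⟨m + 1 - i, by omega, by omega, ?_⟩
        rw [sub_nsmul a (show i ≤ m + 1 by omega), sub_eq_add_neg]
      · rw [Finset.card_image_of_injective _ hfinj, hBcard]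
    · rw [Finset.coe_image]
      exact (hfinj.injOn).bijOn_image
    · intro x hx
      have : x + ((m + 1) • a - x) = (m + 1) • a := by abel
      rw [this]
      exact hcnot
end

section
/- Let G be a linearly ordered abelian group, let 0 < a be an element of G, let 1 ≤ n ≤ m be integers, and let S be an n-element subset of [m]_a. Then the extended Schubert matroid SM_m(a,S) is matched to itself if and only if S = {(m−n+1)a, (m−n+2)a, …, ma} (equivalently, if and only if every n-element subset of [m]_a is a basis of SM_m(a,S)). -/
variable {G : Type*} [AddCommGroup G] [LinearOrder G] [IsOrderedAddMonoid G]

lemma smul_sm {a : G} (ha : 0 < a) : StrictMono (fun i : ℕ => i • a) :=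
  fun _ _ h => nsmul_lt_nsmul_left ha h

lemma mem_multSet_iff {a : G} (ha : 0 < a) {m k : ℕ} :
    k • a ∈ multSet a m ↔ 1 ≤ k ∧ k ≤ m := by
  simp only [multSet, Finset.mem_image, Finset.mem_Icc]
  constructor
  · rintro ⟨i, ⟨h1, h2⟩, hik⟩
    have : i = k := (smul_sm ha).injective hik
    omega
  · exact fun h => ⟨k, ⟨h.1, h.2⟩, rfl⟩

lemma sort_image_s7 {f : ℕ → G} (hf : StrictMono f) (s : Finset ℕ) :
    (s.image f).sort (· ≤ ·) = (s.sort (· ≤ ·)).map f := by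
  have hperm : ((s.image f).sort (· ≤ ·)).Perm ((s.sort (· ≤ ·)).map f) := by
    rw [← Multiset.coe_eq_coe]
    have h1 : ((s.image f).sort (· ≤ ·) : Multiset G) = (s.image f).val :=
      Finset.sort_eq _ _
    have h2 : (s.image f).val = s.val.map f :=
      Finset.image_val_of_injOn (hf.injective.injOn)
    have h3 : (s.sort (· ≤ ·) : Multiset ℕ) = s.val := Finset.sort_eq _ _
    rw [h1, h2, ← h3, Multiset.map_coe]
  exact List.Perm.eq_of_pairwise' (Finset.pairwise_sort _ _)
    (List.Pairwise.map f (fun a b h => hf.monotone h) (Finset.pairwise_sort _ _)) hperm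

lemma sorted_chain {l : List ℕ} (h : l.Pairwise (· < ·)) (i d : ℕ) (hd : i + d < l.length) :
    l[i]'(by omega) + d ≤ l[i + d]'hd := by
  induction d with
  | zero => simp
  | succ d ih =>
    have h1 := ih (by omega)
    have h2 : l[i + d]'(by omega) < l[i + (d+1)]'hd := by
      have := h.rel_get_of_lt (a := ⟨i + d, by omega⟩) (b := ⟨i + (d+1), by omega⟩)
        (by simp [Fin.lt_def])
      simpa [List.get_eq_getElem] using this
    omega

lemma sorted_chain' {l : List ℕ} (h : l.Pairwise (· < ·)) (i j : ℕ) (hj : j < l.length)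
    (hij : i ≤ j) : l[i]'(by omega) + (j - i) ≤ l[j]'hj := by
  have hx : i + (j - i) = j := by omega
  have := sorted_chain h i (j - i) (by omega)
  simp only [hx] at this
  exact this

lemma nat_sort_bounds {c m : ℕ} {s : Finset ℕ} (hs : s ⊆ Finset.Icc c m) {i : ℕ}
    (hi : i < (s.sort (· ≤ ·)).length) :
    c + i ≤ (s.sort (· ≤ ·))[i]'hi ∧
      (s.sort (· ≤ ·))[i]'hi + (s.card - 1 - i) ≤ m := by
  have hlen : (s.sort (· ≤ ·)).length = s.card := Finset.length_sort _
  have hmem : ∀ (j : ℕ) (hj : j < (s.sort (· ≤ ·)).length),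
      c ≤ (s.sort (· ≤ ·))[j]'hj ∧ (s.sort (· ≤ ·))[j]'hj ≤ m := by
    intro j hj
    have : (s.sort (· ≤ ·))[j]'hj ∈ s :=
      (Finset.mem_sort (α := ℕ) (· ≤ ·)).mp ((s.sort (· ≤ ·)).getElem_mem hj)
    simpa [Finset.mem_Icc] using hs this
  have hsorted : (s.sort (· ≤ ·)).Pairwise (· < ·) := (Finset.sortedLT_sort s).pairwise
  constructor
  · have h0 := (hmem 0 (by omega)).1
    have hch := sorted_chain' hsorted 0 i hi (by omega)
    omega
  · have hch := sorted_chain' hsorted i ((s.sort (· ≤ ·)).length - 1) (by omega) (by omega)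
    have hlast := (hmem ((s.sort (· ≤ ·)).length - 1) (by omega)).2
    omega

lemma top_sort {a : G} (ha : 0 < a) {c m : ℕ} (hc : c ≤ m) {i : ℕ}
    (hi : i < (((Finset.Icc c m).image (fun i : ℕ => i • a)).sort (· ≤ ·)).length) :
    (((Finset.Icc c m).image (fun i : ℕ => i • a)).sort (· ≤ ·))[i]'hi = (c + i) • a := by
  have hsi := sort_image_s7 (smul_sm ha) (Finset.Icc c m)
  have hi' : i < ((Finset.Icc c m).sort (· ≤ ·)).length := by
    simpa [hsi] using hi
  have hb := nat_sort_bounds (le_refl (Finset.Icc c m)) hi'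
  have hcard : (Finset.Icc c m).card = m + 1 - c := Nat.card_Icc c m
  have hlen : ((Finset.Icc c m).sort (· ≤ ·)).length = m + 1 - c := by
    rw [Finset.length_sort, hcard]
  have heq : ((Finset.Icc c m).sort (· ≤ ·))[i]'hi' = c + i := by omega
  have : (((Finset.Icc c m).image (fun i : ℕ => i • a)).sort (· ≤ ·))[i]'hi
      = (fun i : ℕ => i • a) (((Finset.Icc c m).sort (· ≤ ·))[i]'hi') := by
    simp only [hsi]
    exact List.getElem_map _
  rw [this, heq]

lemma exists_nat_rep {a : G} (ha : 0 < a) {m : ℕ} {T : Finset G} (hT : T ⊆ multSet a m) :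
    ∃ T' : Finset ℕ, T' ⊆ Finset.Icc 1 m ∧ T = T'.image (fun i : ℕ => i • a) ∧
      T'.card = T.card := by
  have hTeq : T = ((Finset.Icc 1 m).filter (fun k => k • a ∈ T)).image
      (fun i : ℕ => i • a) := by
    ext x
    simp only [Finset.mem_image, Finset.mem_filter, Finset.mem_Icc]
    constructor
    · intro hx
      obtain ⟨k, hk, rfl⟩ := by simpa [multSet, Finset.mem_Icc] using hT hx
      exact ⟨k, ⟨hk, hx⟩, rfl⟩
    · rintro ⟨k, ⟨_, hk⟩, rfl⟩; exact hk
  refine ⟨(Finset.Icc 1 m).filter (fun k => k • a ∈ T), Finset.filter_subset _ _, hTeq, ?_⟩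
  conv_rhs => rw [hTeq]
  exact (Finset.card_image_of_injective _ (smul_sm ha).injective).symm

lemma sort_getElem_bounds {a : G} (ha : 0 < a) {m n : ℕ} {T : Finset G}
    (hT : T ⊆ multSet a m) (hcard : T.card = n) (hn : 1 ≤ n) (hm : n ≤ m) {i : ℕ}
    (hi : i < (T.sort (· ≤ ·)).length) :
    (1 + i) • a ≤ (T.sort (· ≤ ·))[i]'hi ∧
      (T.sort (· ≤ ·))[i]'hi ≤ (m - n + 1 + i) • a := by
  obtain ⟨T', hT'sub, rfl, hT'card⟩ := exists_nat_rep ha hT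
  have hsi := sort_image_s7 (smul_sm ha) T'
  have hi' : i < (T'.sort (· ≤ ·)).length := by simpa [hsi] using hi
  have hb := nat_sort_bounds hT'sub hi'
  have hlen : (T'.sort (· ≤ ·)).length = n := by
    rw [Finset.length_sort]; omega
  have hgel : ((T'.image (fun i : ℕ => i • a)).sort (· ≤ ·))[i]'hi
      = (fun i : ℕ => i • a) ((T'.sort (· ≤ ·))[i]'hi') := by
    simp only [hsi]; exact List.getElem_map _
  rw [hgel]
  constructor
  · exact (smul_sm ha).monotone (by omega)
  · exact (smul_sm ha).monotone (by omega)

lemma domle_top {a : G} (ha : 0 < a) {m n : ℕ} {T : Finset G}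
    (hT : T ⊆ multSet a m) (hcard : T.card = n) (hn : 1 ≤ n) (hm : n ≤ m) :
    DomLE T ((Finset.Icc (m - n + 1) m).image (fun i : ℕ => i • a)) := by
  intro i hTi hSi
  rw [top_sort ha (by omega) hSi]
  exact (sort_getElem_bounds ha hT hcard hn hm hTi).2


/-- Theorem (symmetric matchability for Schubert matroids): `SM_m(a, S)` is matched
to itself iff `S = {(m-n+1)a, …, ma}`, i.e. iff `SM_m(a, S)` is the uniform matroid
of rank `n`. -/
theorem schubert_matched_self_iff {G : Type*} [AddCommGroup G] [LinearOrder G] [IsOrderedAddMonoid G]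
    (a : G) (ha : 0 < a) (n m : ℕ) (hn : 1 ≤ n) (hm : n ≤ m)
    (S : Finset G) (hS : S ⊆ multSet a m) (hScard : S.card = n) :
    FamMatchedTo (multSet a m) (SchubertBasis a n m S) (SchubertBasis a n m S) ↔
      S = (Finset.Icc (m - n + 1) m).image (fun i : ℕ => i • a) := by
  constructor
  · intro h
    -- apply matching to the minimal basis B₀ = {a, 2a, …, na}
    have hB0sub : (Finset.Icc 1 n).image (fun i : ℕ => i • a) ⊆ multSet a m :=
      Finset.image_subset_image (Finset.Icc_subset_Icc_right hm)
    have hB0card : ((Finset.Icc 1 n).image (fun i : ℕ => i • a)).card = n := by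
      rw [Finset.card_image_of_injective _ (smul_sm ha).injective, Nat.card_Icc]; omega
    have hB0dom : DomLE ((Finset.Icc 1 n).image (fun i : ℕ => i • a)) S := by
      intro i hTi hSi
      rw [top_sort ha hn hTi]
      exact (sort_getElem_bounds ha hS hScard hn hm hSi).1
    obtain ⟨B', ⟨hB'sub, hB'card, hB'dom⟩, f, hbij, hne⟩ :=
      h _ ⟨hB0sub, hB0card, hB0dom⟩
    have htopcard : ((Finset.Icc (m - n + 1) m).image (fun i : ℕ => i • a)).card = n := by
      rw [Finset.card_image_of_injective _ (smul_sm ha).injective, Nat.card_Icc]; omega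
    have hB'top : B' = (Finset.Icc (m - n + 1) m).image (fun i : ℕ => i • a) := by
      apply Finset.eq_of_subset_of_card_le
      · intro y hy
        obtain ⟨k, ⟨hk1, hk2⟩, rfl⟩ : ∃ k, (1 ≤ k ∧ k ≤ m) ∧ k • a = y := by
          simpa [multSet, Finset.mem_Icc] using hB'sub hy
        have hyim : k • a ∈ f '' ↑((Finset.Icc 1 n).image (fun i : ℕ => i • a)) := by
          rw [hbij.image_eq]; exact hy
        obtain ⟨x, hx, hfx⟩ := hyim
        obtain ⟨ix, hix, rfl⟩ : ∃ ix ∈ Finset.Icc 1 n, ix • a = x := by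
          simpa using hx
        rw [Finset.mem_Icc] at hix
        have hnot := hne _ (by exact_mod_cast hx)
        rw [hfx, ← add_nsmul] at hnot
        rw [mem_multSet_iff ha] at hnot
        refine Finset.mem_image.mpr ⟨k, Finset.mem_Icc.mpr ⟨by omega, hk2⟩, rfl⟩
      · rw [hB'card, htopcard]
    rw [hB'top] at hB'dom
    have hlenS : (S.sort (· ≤ ·)).length = n := by rw [Finset.length_sort, hScard]
    have hlenT : (((Finset.Icc (m - n + 1) m).image (fun i : ℕ => i • a)).sort
        (· ≤ ·)).length = n := by rw [Finset.length_sort, htopcard]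
    have hsort : S.sort (· ≤ ·) =
        ((Finset.Icc (m - n + 1) m).image (fun i : ℕ => i • a)).sort (· ≤ ·) := by
      apply List.ext_getElem (by omega)
      intro i h1 h2
      refine le_antisymm ?_ (hB'dom i h2 h1)
      rw [top_sort ha (by omega) h2]
      exact (sort_getElem_bounds ha hS hScard hn hm h1).2
    ext x
    rw [← Finset.mem_sort (α := G) (· ≤ ·), hsort, Finset.mem_sort]
  · intro hSeq B hB
    obtain ⟨hBsub, hBcard, -⟩ := hB
    have hinj : Function.Injective (fun x : G => (m + 1) • a - x) := fun x y hxy => by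
      simpa using sub_right_inj.mp hxy
    have hB'sub : B.image (fun x => (m + 1) • a - x) ⊆ multSet a m := by
      intro y hy
      obtain ⟨x, hx, rfl⟩ := Finset.mem_image.mp hy
      obtain ⟨k, ⟨hk1, hk2⟩, rfl⟩ : ∃ k, (1 ≤ k ∧ k ≤ m) ∧ k • a = x := by
        simpa [multSet, Finset.mem_Icc] using hBsub hx
      have hk' : (m + 1 - k) • a = (m + 1) • a - k • a := by
        rw [sub_nsmul a (by omega : k ≤ m + 1), sub_eq_add_neg]
      show (m + 1) • a - k • a ∈ multSet a m
      rw [← hk']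
      exact (mem_multSet_iff ha).mpr ⟨by omega, by omega⟩
    have hB'card : (B.image (fun x => (m + 1) • a - x)).card = n := by
      rw [Finset.card_image_of_injective _ hinj, hBcard]
    refine ⟨B.image (fun x => (m + 1) • a - x), ⟨hB'sub, hB'card, ?_⟩,
      fun x => (m + 1) • a - x, ?_, ?_⟩
    · rw [hSeq]; exact domle_top ha hB'sub hB'card hn hm
    · rw [Finset.coe_image]; exact hinj.injOn.bijOn_image
    · intro x hx
      have hxc : x + ((m + 1) • a - x) = (m + 1) • a := by abel
      rw [hxc]
      intro hmem
      have := (mem_multSet_iff ha).mp hmem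
      omega
end
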